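/- Let μ_0, μ_1, ... be complex numbers and set γ_k = ∑_{j=0}^{⌊k/2⌋} binomial(k, j) μ_{k−2j}. Then for variables x_1, ..., x_n (all nonzero), ∑_{0 ≤ i ≤ j ≤ n} μ_{j−i} e_i(x) e_j(x) = e_n(x) · ∑_{k=0}^n γ_k · e_{n−k}(x_1 + 1/x_1, ..., x_n + 1/x_n). -/
import Mathlib


open Finset

/-- The `k`-th elementary symmetric function of `x₁, …, xₙ` (zero for `k > n`). -/
noncomputable def esym {n : ℕ} (x : Fin n → ℂ) (k : ℕ) : ℂ :=
  ∑ s ∈ Finset.univ.powersetCard k, ∏ i ∈ s, x i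

section Aux

variable {α : Type*} [DecidableEq α]

/-- Summing over `powersetCard i` for `i` in a range equals summing over a card-filtered
powerset. -/
lemma aux_sum_pc (s : Finset α) (m : ℕ) (f : Finset α → ℂ) :
    ∑ i ∈ Finset.range (m + 1), ∑ A ∈ s.powersetCard i, f A
      = ∑ A ∈ s.powerset.filter (fun A => A.card ≤ m), f A := by
  rw [← Finset.sum_fiberwise_of_maps_to (g := Finset.card) (t := Finset.range (m + 1))
      (fun A hA => by simp only [mem_filter, mem_range] at *; omega) f]
  refine Finset.sum_congr rfl fun i hi => Finset.sum_congr ?_ fun _ _ => rfl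
  simp only [mem_range] at hi
  ext A
  simp only [Finset.mem_filter, Finset.mem_powersetCard, Finset.mem_powerset]
  constructor
  · exact fun h => ⟨⟨h.1, h.2.le.trans (by omega)⟩, h.2⟩
  · exact fun h => ⟨h.1.1, h.2⟩

lemma sum_product_filter {ι κ : Type*} (s : Finset ι) (t : Finset κ) (P : ι → κ → Prop)
    [∀ i j, Decidable (P i j)] (f : ι → κ → ℂ) :
    ∑ p ∈ (s ×ˢ t).filter (fun p => P p.1 p.2), f p.1 p.2
      = ∑ a ∈ s, ∑ b ∈ t.filter (P a), f a b := by
  rw [Finset.sum_filter, Finset.sum_product]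
  exact Finset.sum_congr rfl fun a _ => (Finset.sum_filter _ _).symm

lemma sum_product_filter' {ι κ : Type*} (s : Finset ι) (t : Finset κ) (P : ι → κ → Prop)
    [∀ i j, Decidable (P i j)] (f : ι → κ → ℂ) :
    ∑ p ∈ (s ×ˢ t).filter (fun p => P p.1 p.2), f p.1 p.2
      = ∑ b ∈ t, ∑ a ∈ s.filter (fun a => P a b), f a b := by
  rw [Finset.sum_filter, Finset.sum_product, Finset.sum_comm]
  exact Finset.sum_congr rfl fun b _ => (Finset.sum_filter _ _).symm

end Aux

section Main

variable {n : ℕ} (μ : ℕ → ℂ) (x : Fin n → ℂ)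

/-- The left-hand side as a sum over pairs of subsets with `#A ≤ #B`. -/
lemma lhs_eq :
    ∑ j ∈ Finset.range (n + 1), ∑ i ∈ Finset.range (j + 1),
        μ (j - i) * esym x i * esym x j
      = ∑ p ∈ ((Finset.univ.powerset ×ˢ Finset.univ.powerset).filter
          (fun p : Finset (Fin n) × Finset (Fin n) => p.1.card ≤ p.2.card)),
          μ (p.2.card - p.1.card) * (∏ i ∈ p.1, x i) * (∏ i ∈ p.2, x i) := by
  rw [sum_product_filter' (P := fun A B : Finset (Fin n) => A.card ≤ B.card)
      (f := fun A B => μ (B.card - A.card) * (∏ i ∈ A, x i) * (∏ i ∈ B, x i))]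
  have step1 : ∀ j, (∑ i ∈ Finset.range (j + 1), μ (j - i) * esym x i)
      = ∑ A ∈ (Finset.univ.powerset : Finset (Finset (Fin n))).filter (fun A => A.card ≤ j),
          μ (j - A.card) * ∏ i ∈ A, x i := by
    intro j
    rw [← aux_sum_pc]
    refine Finset.sum_congr rfl fun i _ => ?_
    rw [esym, Finset.mul_sum]
    refine Finset.sum_congr rfl fun A hA => ?_
    rw [(Finset.mem_powersetCard.mp hA).2]
  calc ∑ j ∈ Finset.range (n + 1), ∑ i ∈ Finset.range (j + 1), μ (j - i) * esym x i * esym x j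
      = ∑ j ∈ Finset.range (n + 1),
          (∑ i ∈ Finset.range (j + 1), μ (j - i) * esym x i) * esym x j := by
        exact Finset.sum_congr rfl fun j _ => (Finset.sum_mul _ _ _).symm
    _ = ∑ j ∈ Finset.range (n + 1), ∑ B ∈ (Finset.univ : Finset (Fin n)).powersetCard j,
          ∑ A ∈ (Finset.univ.powerset : Finset (Finset (Fin n))).filter
              (fun A => A.card ≤ B.card),
            μ (B.card - A.card) * (∏ i ∈ A, x i) * (∏ i ∈ B, x i) := by
        refine Finset.sum_congr rfl fun j _ => ?_
        rw [step1, esym, Finset.mul_sum]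
        refine Finset.sum_congr rfl fun B hB => ?_
        rw [Finset.sum_mul, ← (Finset.mem_powersetCard.mp hB).2]
    _ = ∑ B ∈ (Finset.univ.powerset : Finset (Finset (Fin n))).filter (fun B => B.card ≤ n),
          ∑ A ∈ (Finset.univ.powerset : Finset (Finset (Fin n))).filter
              (fun A => A.card ≤ B.card),
            μ (B.card - A.card) * (∏ i ∈ A, x i) * (∏ i ∈ B, x i) := aux_sum_pc _ _ _
    _ = ∑ B ∈ (Finset.univ.powerset : Finset (Finset (Fin n))),
          ∑ A ∈ (Finset.univ.powerset : Finset (Finset (Fin n))).filter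
              (fun A => A.card ≤ B.card),
            μ (B.card - A.card) * (∏ i ∈ A, x i) * (∏ i ∈ B, x i) := by
        rw [Finset.filter_true_of_mem]
        intro B hB
        simpa using Finset.card_le_card (Finset.mem_powerset.mp hB)


/-- `γ_k`. -/
noncomputable def gam (μ : ℕ → ℂ) (k : ℕ) : ℂ :=
  ∑ j ∈ Finset.range (k / 2 + 1), (k.choose j : ℂ) * μ (k - 2 * j)

/-- The sum over a fiber of `(A, B) ↦ (A ∩ B, A ∪ B)` equals `γ_{|U|-|T|} m_T m_U`. -/
lemma fiber_sum (T U : Finset (Fin n)) (hTU : T ⊆ U) :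
    ∑ p ∈ ((Finset.univ.powerset ×ˢ Finset.univ.powerset).filter
        (fun p : Finset (Fin n) × Finset (Fin n) => p.1.card ≤ p.2.card)).filter
        (fun p => (p.1 ∩ p.2, p.1 ∪ p.2) = (T, U)),
        μ (p.2.card - p.1.card) * (∏ i ∈ p.1, x i) * (∏ i ∈ p.2, x i)
      = gam μ (U.card - T.card) * ((∏ i ∈ T, x i) * (∏ i ∈ U, x i)) := by
  set d := U.card - T.card with hd
  have hdd : (U \ T).card = d := by
    rw [Finset.card_sdiff_of_subset hTU]
  have hγ : gam μ d * ((∏ i ∈ T, x i) * (∏ i ∈ U, x i))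
      = ∑ D ∈ (U \ T).powerset.filter (fun D => D.card ≤ d / 2),
          μ (d - 2 * D.card) * ((∏ i ∈ T, x i) * (∏ i ∈ U, x i)) := by
    have hpc : ∀ j, ∑ D ∈ (U \ T).powersetCard j,
        μ (d - 2 * D.card) * ((∏ i ∈ T, x i) * (∏ i ∈ U, x i))
        = (d.choose j : ℂ) * μ (d - 2 * j) * ((∏ i ∈ T, x i) * (∏ i ∈ U, x i)) := by
      intro j
      rw [Finset.sum_congr rfl (fun D hD => by
        rw [(Finset.mem_powersetCard.mp hD).2]),
        Finset.sum_const, Finset.card_powersetCard, hdd, nsmul_eq_mul]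
      ring
    rw [← aux_sum_pc, gam, Finset.sum_mul]
    exact Finset.sum_congr rfl fun j _ => (hpc j).symm
  rw [hγ]
  -- characterize membership
  have mem_fiber : ∀ p : Finset (Fin n) × Finset (Fin n),
      p ∈ ((Finset.univ.powerset ×ˢ Finset.univ.powerset).filter
        (fun p : Finset (Fin n) × Finset (Fin n) => p.1.card ≤ p.2.card)).filter
        (fun p => (p.1 ∩ p.2, p.1 ∪ p.2) = (T, U))
      ↔ p.1 ∩ p.2 = T ∧ p.1 ∪ p.2 = U ∧ p.1.card ≤ p.2.card := by
    intro p
    simp only [Finset.mem_filter, Finset.mem_product, Finset.mem_powerset, Prod.mk.injEq]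
    exact ⟨fun h => ⟨h.2.1, h.2.2, h.1.2⟩,
      fun h => ⟨⟨⟨Finset.subset_univ _, Finset.subset_univ _⟩, h.2.2⟩, h.1, h.2.1⟩⟩
  have mem_D : ∀ D : Finset (Fin n),
      D ∈ (U \ T).powerset.filter (fun D => D.card ≤ d / 2)
      ↔ D ⊆ U \ T ∧ D.card * 2 ≤ d := by
    intro D
    simp only [Finset.mem_filter, Finset.mem_powerset]
    rw [Nat.le_div_iff_mul_le two_pos]
  have struct : ∀ p : Finset (Fin n) × Finset (Fin n), p.1 ∩ p.2 = T → p.1 ∪ p.2 = U →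
      p.2 = U \ (p.1 \ T) ∧ p.1 = T ∪ (p.1 \ T) ∧ p.1 \ T ⊆ U \ T := by
    rintro ⟨A, B⟩ h1 h2
    subst h1; subst h2
    refine ⟨?_, ?_, ?_⟩
    · ext a
      simp only [Finset.mem_sdiff, Finset.mem_union, Finset.mem_inter]
      tauto
    · ext a
      simp only [Finset.mem_sdiff, Finset.mem_union, Finset.mem_inter]
      tauto
    · intro a ha
      simp only [Finset.mem_sdiff, Finset.mem_union, Finset.mem_inter] at *
      tauto
  refine Finset.sum_nbij' (fun p => p.1 \ T) (fun D => (T ∪ D, U \ D)) ?_ ?_ ?_ ?_ ?_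
  · intro p hp
    obtain ⟨h1, h2, h3⟩ := (mem_fiber p).mp hp
    obtain ⟨hB, hA, hsub⟩ := struct p h1 h2
    rw [mem_D]
    refine ⟨hsub, ?_⟩
    have hdisj : Disjoint T (p.1 \ T) := Finset.disjoint_sdiff
    have hc1 : p.1.card = T.card + (p.1 \ T).card := by
      conv_lhs => rw [hA]
      exact Finset.card_union_of_disjoint hdisj
    have hDU : p.1 \ T ⊆ U := hsub.trans Finset.sdiff_subset
    have hc2 : p.2.card = U.card - (p.1 \ T).card := by
      rw [hB]; exact Finset.card_sdiff_of_subset hDU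
    have hc3 : (p.1 \ T).card ≤ U.card := Finset.card_le_card hDU
    have hc4 : T.card ≤ U.card := Finset.card_le_card hTU
    omega
  · intro D hD
    obtain ⟨hsub, hcard⟩ := (mem_D D).mp hD
    have hDa : ∀ a, a ∈ D → a ∈ U ∧ a ∉ T := fun a ha => Finset.mem_sdiff.mp (hsub ha)
    have hTa : ∀ a, a ∈ T → a ∈ U := fun a ha => hTU ha
    have hdisj : Disjoint T D :=
      Finset.disjoint_left.mpr fun {a} haT haD => (hDa a haD).2 haT
    have hDU : D ⊆ U := fun a ha => (hDa a ha).1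
    rw [mem_fiber]
    dsimp only
    refine ⟨?_, ?_, ?_⟩
    · ext a
      simp only [Finset.mem_inter, Finset.mem_union, Finset.mem_sdiff]
      have h1 := hDa a
      have h2 := hTa a
      tauto
    · ext a
      simp only [Finset.mem_union, Finset.mem_sdiff]
      have h1 := hDa a
      have h2 := hTa a
      by_cases haD : a ∈ D <;> tauto
    · have e1 : (T ∪ D).card = T.card + D.card := Finset.card_union_of_disjoint hdisj
      have e2 : (U \ D).card = U.card - D.card := Finset.card_sdiff_of_subset hDU
      have e3 : D.card ≤ U.card := Finset.card_le_card hDU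
      have e4 : T.card ≤ U.card := Finset.card_le_card hTU
      simp only [e1, e2]
      omega
  · intro p hp
    obtain ⟨h1, h2, h3⟩ := (mem_fiber p).mp hp
    obtain ⟨hB, hA, hsub⟩ := struct p h1 h2
    have hTA : T ⊆ p.1 := by rw [← h1]; exact Finset.inter_subset_left
    obtain ⟨A, B⟩ := p
    simp only [Prod.mk.injEq]
    exact ⟨(Finset.union_sdiff_of_subset hTA), hB.symm⟩
  · intro D hD
    obtain ⟨hsub, hcard⟩ := (mem_D D).mp hD
    have hdisj : Disjoint T D :=
      Finset.disjoint_left.mpr fun {a} haT haD => (Finset.mem_sdiff.mp (hsub haD)).2 haT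
    dsimp only
    exact Finset.union_sdiff_cancel_left hdisj
  · intro p hp
    obtain ⟨h1, h2, h3⟩ := (mem_fiber p).mp hp
    obtain ⟨hB, hA, hsub⟩ := struct p h1 h2
    have hdisj : Disjoint T (p.1 \ T) := Finset.disjoint_sdiff
    have hc1 : p.1.card = T.card + (p.1 \ T).card := by
      conv_lhs => rw [hA]
      exact Finset.card_union_of_disjoint hdisj
    have hDU : p.1 \ T ⊆ U := hsub.trans Finset.sdiff_subset
    have hc2 : p.2.card = U.card - (p.1 \ T).card := by
      rw [hB]; exact Finset.card_sdiff_of_subset hDU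
    have hc3 : (p.1 \ T).card ≤ U.card := Finset.card_le_card hDU
    have hc4 : T.card ≤ U.card := Finset.card_le_card hTU
    have harg : p.2.card - p.1.card = d - 2 * (p.1 \ T).card := by omega
    rw [harg, mul_assoc]
    congr 1
    rw [← Finset.prod_union_inter, h2, h1, mul_comm]

/-- The `k`-th summand of the right-hand side, as a sum over nested pairs. -/
lemma rhs_k (hx : ∀ i, x i ≠ 0) (k : ℕ) (hk : k ≤ n) :
    esym x n * esym (fun i => x i + (x i)⁻¹) (n - k)
      = ∑ q ∈ (Finset.univ.powerset ×ˢ Finset.univ.powerset).filter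
          (fun q : Finset (Fin n) × Finset (Fin n) => q.1 ⊆ q.2 ∧ q.2.card = q.1.card + k),
          (∏ i ∈ q.1, x i) * (∏ i ∈ q.2, x i) := by
  have hesymn : esym x n = ∏ i, x i := by
    have hpc : (Finset.univ : Finset (Fin n)).powersetCard n = {Finset.univ} := by
      have h := Finset.powersetCard_self (Finset.univ : Finset (Fin n))
      rwa [Finset.card_univ, Fintype.card_fin] at h
    rw [esym, hpc, Finset.sum_singleton]
  rw [hesymn, esym, Finset.mul_sum]
  have expand : ∀ S ∈ (Finset.univ : Finset (Fin n)).powersetCard (n - k),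
      ((∏ i, x i) * ∏ i ∈ S, (x i + (x i)⁻¹))
        = ∑ T ∈ S.powerset, (∏ i ∈ T, x i) * (∏ i ∈ (S \ T)ᶜ, x i) := by
    intro S _
    rw [Finset.prod_add, Finset.mul_sum]
    refine Finset.sum_congr rfl fun T hT => ?_
    have hone : (∏ i ∈ S \ T, x i) * ∏ i ∈ S \ T, (x i)⁻¹ = 1 := by
      rw [← Finset.prod_mul_distrib]
      exact Finset.prod_eq_one fun i _ => mul_inv_cancel₀ (hx i)
    rw [← Finset.prod_mul_prod_compl (S \ T) x]
    linear_combination ((∏ i ∈ T, x i) * ∏ i ∈ (S \ T)ᶜ, x i) * hone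
  rw [Finset.sum_congr rfl expand]
  have hnested :
      ∑ S ∈ (Finset.univ : Finset (Fin n)).powersetCard (n - k),
        ∑ T ∈ S.powerset, (∏ i ∈ T, x i) * (∏ i ∈ (S \ T)ᶜ, x i)
      = ∑ p ∈ (Finset.univ.powerset ×ˢ Finset.univ.powerset).filter
          (fun p : Finset (Fin n) × Finset (Fin n) => p.1.card = n - k ∧ p.2 ⊆ p.1),
          (∏ i ∈ p.2, x i) * (∏ i ∈ (p.1 \ p.2)ᶜ, x i) := by
    rw [sum_product_filter (s := (Finset.univ.powerset : Finset (Finset (Fin n))))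
      (t := Finset.univ.powerset) (P := fun a b : Finset (Fin n) => a.card = n - k ∧ b ⊆ a)
      (f := fun a b => (∏ i ∈ b, x i) * ∏ i ∈ (a \ b)ᶜ, x i)]
    rw [Finset.powersetCard_eq_filter, Finset.sum_filter]
    refine (Finset.sum_congr rfl fun S _ => ?_).symm
    by_cases h : S.card = n - k
    · rw [if_pos h]
      have : Finset.univ.powerset.filter (fun b : Finset (Fin n) => S.card = n - k ∧ b ⊆ S)
          = S.powerset := by
        ext b
        simp only [Finset.mem_filter, Finset.mem_powerset]
        exact ⟨fun hb => hb.2.2, fun hb => ⟨Finset.subset_univ _, h, hb⟩⟩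
      rw [this]
    · rw [if_neg h, Finset.filter_false_of_mem (fun b _ => by simp [h]), Finset.sum_empty]
  rw [hnested]
  refine Finset.sum_nbij' (fun p => (p.2, (p.1 \ p.2)ᶜ)) (fun q => (q.1 ∪ q.2ᶜ, q.1))
    ?_ ?_ ?_ ?_ ?_
  · rintro ⟨S, T⟩ hp
    simp only [Finset.mem_filter, Finset.mem_product, Finset.mem_powerset] at hp ⊢
    have hS := hp.2.1
    have hT := hp.2.2
    refine ⟨⟨Finset.subset_univ _, Finset.subset_univ _⟩, ?_, ?_⟩
    · intro a ha
      simp only [Finset.mem_compl, Finset.mem_sdiff]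
      exact fun h => h.2 ha
    · have e1 : (S \ T).card = S.card - T.card := Finset.card_sdiff_of_subset hT
      have e2 : ((S \ T)ᶜ).card = n - (S \ T).card := by
        rw [Finset.card_compl, Fintype.card_fin]
      have e3 : T.card ≤ S.card := Finset.card_le_card hT
      have e4 : S.card ≤ n := by simpa using Finset.card_le_univ S
      omega
  · rintro ⟨T, U⟩ hq
    simp only [Finset.mem_filter, Finset.mem_product, Finset.mem_powerset] at hq ⊢
    have hTU := hq.2.1
    have hcard := hq.2.2
    have hdisj : Disjoint T Uᶜ :=
      Finset.disjoint_left.mpr fun {a} haT haUc => (Finset.mem_compl.mp haUc) (hTU haT)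
    refine ⟨⟨Finset.subset_univ _, Finset.subset_univ _⟩, ?_, Finset.subset_union_left⟩
    have e1 : (T ∪ Uᶜ).card = T.card + Uᶜ.card := Finset.card_union_of_disjoint hdisj
    have e2 : Uᶜ.card = n - U.card := by rw [Finset.card_compl, Fintype.card_fin]
    have e3 : U.card ≤ n := by simpa using Finset.card_le_univ U
    omega
  · rintro ⟨S, T⟩ hp
    simp only [Finset.mem_filter, Finset.mem_product, Finset.mem_powerset] at hp
    have hT := hp.2.2
    simp only [Prod.mk.injEq, compl_compl]
    exact ⟨Finset.union_sdiff_of_subset hT, trivial⟩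
  · rintro ⟨T, U⟩ hq
    simp only [Finset.mem_filter, Finset.mem_product, Finset.mem_powerset] at hq
    have hTU := hq.2.1
    have hdisj : Disjoint T Uᶜ :=
      Finset.disjoint_left.mpr fun {a} haT haUc => (Finset.mem_compl.mp haUc) (hTU haT)
    simp only [Prod.mk.injEq]
    exact ⟨trivial, by rw [Finset.union_sdiff_cancel_left hdisj, compl_compl]⟩
  · rintro ⟨S, T⟩ _
    rfl

end Main

/-- For complex `μ₀, μ₁, …`, set `γ_k = ∑_{j=0}^{⌊k/2⌋} binom(k,j) μ_{k−2j}`.  Then for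
nonzero `x₁, …, xₙ`:
`∑_{0≤i≤j≤n} μ_{j−i} e_i(x) e_j(x) = e_n(x) · ∑_{k=0}^n γ_k e_{n−k}(x + 1/x)`. -/
theorem esymm_mu_identity (μ : ℕ → ℂ) (n : ℕ) (x : Fin n → ℂ) (hx : ∀ i, x i ≠ 0) :
    ∑ j ∈ Finset.range (n + 1), ∑ i ∈ Finset.range (j + 1),
        μ (j - i) * esym x i * esym x j
      = esym x n * ∑ k ∈ Finset.range (n + 1),
          (∑ j ∈ Finset.range (k / 2 + 1), (k.choose j : ℂ) * μ (k - 2 * j))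
            * esym (fun i => x i + (x i)⁻¹) (n - k) := by
  rw [lhs_eq μ x]
  have hmaps : ∀ p ∈ (Finset.univ.powerset ×ˢ Finset.univ.powerset).filter
      (fun p : Finset (Fin n) × Finset (Fin n) => p.1.card ≤ p.2.card),
      (p.1 ∩ p.2, p.1 ∪ p.2) ∈ (Finset.univ.powerset ×ˢ Finset.univ.powerset).filter
        (fun q : Finset (Fin n) × Finset (Fin n) => q.1 ⊆ q.2) := by
    intro p _
    simp only [Finset.mem_filter, Finset.mem_product, Finset.mem_powerset]
    exact ⟨⟨Finset.subset_univ _, Finset.subset_univ _⟩, Finset.inter_subset_union⟩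
  rw [← Finset.sum_fiberwise_of_maps_to hmaps
      (fun p => μ (p.2.card - p.1.card) * (∏ i ∈ p.1, x i) * ∏ i ∈ p.2, x i)]
  have hfib : ∀ q ∈ (Finset.univ.powerset ×ˢ Finset.univ.powerset).filter
      (fun q : Finset (Fin n) × Finset (Fin n) => q.1 ⊆ q.2),
      ∑ p ∈ ((Finset.univ.powerset ×ˢ Finset.univ.powerset).filter
          (fun p : Finset (Fin n) × Finset (Fin n) => p.1.card ≤ p.2.card)).filter
          (fun p => (p.1 ∩ p.2, p.1 ∪ p.2) = q),
          μ (p.2.card - p.1.card) * (∏ i ∈ p.1, x i) * ∏ i ∈ p.2, x i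
        = gam μ (q.2.card - q.1.card) * ((∏ i ∈ q.1, x i) * ∏ i ∈ q.2, x i) := by
    intro q hq
    have hsub : q.1 ⊆ q.2 := (Finset.mem_filter.mp hq).2
    exact fiber_sum μ x q.1 q.2 hsub
  rw [Finset.sum_congr rfl hfib]
  have hRHS : esym x n * ∑ k ∈ Finset.range (n + 1),
      gam μ k * esym (fun i => x i + (x i)⁻¹) (n - k)
      = ∑ q ∈ (Finset.univ.powerset ×ˢ Finset.univ.powerset).filter
          (fun q : Finset (Fin n) × Finset (Fin n) => q.1 ⊆ q.2),
          gam μ (q.2.card - q.1.card) * ((∏ i ∈ q.1, x i) * ∏ i ∈ q.2, x i) := by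
    rw [Finset.mul_sum]
    calc ∑ k ∈ Finset.range (n + 1),
          esym x n * (gam μ k * esym (fun i => x i + (x i)⁻¹) (n - k))
        = ∑ k ∈ Finset.range (n + 1),
            gam μ k * (esym x n * esym (fun i => x i + (x i)⁻¹) (n - k)) :=
          Finset.sum_congr rfl fun k _ => by ring
      _ = ∑ k ∈ Finset.range (n + 1), gam μ k *
            ∑ q ∈ (Finset.univ.powerset ×ˢ Finset.univ.powerset).filter
              (fun q : Finset (Fin n) × Finset (Fin n) =>
                q.1 ⊆ q.2 ∧ q.2.card = q.1.card + k),
              (∏ i ∈ q.1, x i) * (∏ i ∈ q.2, x i) := by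
          refine Finset.sum_congr rfl fun k hk => ?_
          rw [rhs_k x hx k (Nat.lt_succ_iff.mp (Finset.mem_range.mp hk))]
      _ = ∑ k ∈ Finset.range (n + 1),
            ∑ q ∈ ((Finset.univ.powerset ×ˢ Finset.univ.powerset).filter
              (fun q : Finset (Fin n) × Finset (Fin n) => q.1 ⊆ q.2)).filter
                (fun q => q.2.card - q.1.card = k),
              gam μ (q.2.card - q.1.card) * ((∏ i ∈ q.1, x i) * ∏ i ∈ q.2, x i) := by
          refine Finset.sum_congr rfl fun k hk => ?_
          rw [Finset.mul_sum]
          have hset : (Finset.univ.powerset ×ˢ Finset.univ.powerset).filter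
              (fun q : Finset (Fin n) × Finset (Fin n) =>
                q.1 ⊆ q.2 ∧ q.2.card = q.1.card + k)
              = ((Finset.univ.powerset ×ˢ Finset.univ.powerset).filter
                (fun q : Finset (Fin n) × Finset (Fin n) => q.1 ⊆ q.2)).filter
                  (fun q => q.2.card - q.1.card = k) := by
            rw [Finset.filter_filter]
            refine Finset.filter_congr fun q _ => ?_
            constructor
            · rintro ⟨h1, h2⟩
              have := Finset.card_le_card h1
              exact ⟨h1, by omega⟩
            · rintro ⟨h1, h2⟩
              have := Finset.card_le_card h1
              exact ⟨h1, by omega⟩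
          rw [hset]
          refine Finset.sum_congr rfl fun q hq => ?_
          rw [(Finset.mem_filter.mp hq).2]
      _ = ∑ q ∈ (Finset.univ.powerset ×ˢ Finset.univ.powerset).filter
            (fun q : Finset (Fin n) × Finset (Fin n) => q.1 ⊆ q.2),
            gam μ (q.2.card - q.1.card) * ((∏ i ∈ q.1, x i) * ∏ i ∈ q.2, x i) :=
          Finset.sum_fiberwise_of_maps_to (fun q hq => by
            simp only [Finset.mem_range]
            have : q.2.card ≤ n := by simpa using Finset.card_le_univ q.2
            omega) _
  exact hRHS.symm
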